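/- arXiv:1504.00100 — 3 statements merged into one kernel-verified Lean document; each statement's English description precedes it below -/
import Mathlib

section
/- Let A and B be unital C*-algebras, P₁ a nontrivial projection in A, P₂ = 1 - P₁, η a nonzero complex number with |η| ≠ 1, and Φ : A → B a bijective map with Φ(0) = 0 preserving the Jordan η*-product for P ∈ {P₁, P₂}. Then for every A₁₁ ∈ P₁AP₁ and D₂₂ ∈ P₂AP₂, one has Φ(A₁₁ + D₂₂) = Φ(A₁₁) + Φ(D₂₂). -/
/-!
Choose `S` with `Φ S = Φ A₁₁ + Φ D₂₂` by surjectivity. For a projection `P` the Jordan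
`η*`-product is `X * P + η • star (X * P)`, so preservation at `P` turns `Φ S = Φ A₁₁ + Φ D₂₂`
into `Φ (f (S * P)) = Φ (f (A₁₁ * P)) + Φ (f (D₂₂ * P))` with `f X = X + η • star X`.
One of the two corners is killed by `P`, and both `Φ` and `f` are injective (the latter because
`|η| ≠ 1`), so `S * P₁ = A₁₁` and `S * (1 - P₁) = D₂₂`; adding gives `S = A₁₁ + D₂₂`.
-/

theorem add_smul_star_injective {M : Type*} [AddCommGroup M] [StarAddMonoid M] [Module ℂ M]
    [StarModule ℂ M] {η : ℂ} (hη : ‖η‖ ≠ 1) : Function.Injective fun X : M => X + η • star X := by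
  suffices h : ∀ Z : M, Z + η • star Z = 0 → Z = 0 by
    intro X Y hXY
    refine sub_eq_zero.mp (h _ ?_)
    rwa [star_sub, smul_sub, sub_add_sub_comm, sub_eq_zero]
  intro Z hZ
  have hZstar : starRingEnd ℂ η • Z = -star Z := by
    refine eq_neg_of_add_eq_zero_right ?_
    simpa only [star_add, star_smul, star_star, star_zero, Complex.star_def] using congrArg star hZ
  -- `Z = -η Z* = η η̄ Z = |η|² Z`
  have hnorm : ((1 : ℂ) - (‖η‖ : ℂ) ^ 2) • Z = 0 := calc
    ((1 : ℂ) - (‖η‖ : ℂ) ^ 2) • Z = Z - η • (starRingEnd ℂ η • Z) := by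
      rw [sub_smul, one_smul, ← Complex.mul_conj', smul_smul]
    _ = Z + η • star Z := by rw [hZstar, smul_neg, sub_neg_eq_add]
    _ = 0 := hZ
  have hcoef : (1 : ℂ) - (‖η‖ : ℂ) ^ 2 ≠ 0 := by
    rw [sub_ne_zero, ne_comm]
    exact_mod_cast fun h => hη ((pow_eq_one_iff_of_nonneg (norm_nonneg η) two_ne_zero).mp h)
  exact (smul_eq_zero.mp hnorm).resolve_left hcoef

theorem mul_add_smul_mul_star_of_isSelfAdjoint {R : Type*} [Mul R] [StarMul R] [Add R]
    [SMul ℂ R] (η : ℂ) (X : R) {P : R} (hP : IsSelfAdjoint P) :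
    X * P + η • (P * star X) = X * P + η • star (X * P) := by
  rw [star_mul, hP.star_eq]

theorem map_jordan_of_map_eq_add {R : Type*} [Mul R] [Add R] [Star R] [SMul ℂ R]
    {S : Type*} [Ring S] [StarRing S] [Module ℂ S] {η : ℂ} {Φ : R → S} {P X Y Z : R}
    (hΦ : ∀ X, Φ (X * P + η • (P * star X)) = Φ X * Φ P + η • (Φ P * star (Φ X)))
    (hZ : Φ Z = Φ X + Φ Y) :
    Φ (Z * P + η • (P * star Z)) =
      Φ (X * P + η • (P * star X)) + Φ (Y * P + η • (P * star Y)) := by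
  rw [hΦ, hΦ, hΦ, hZ, star_add, add_mul, mul_add, smul_add]
  abel

theorem mul_eq_of_map_eq_add {R : Type*} [Ring R] [StarRing R] [Module ℂ R] [StarModule ℂ R]
    {S : Type*} [Ring S] [StarRing S] [Module ℂ S] {η : ℂ} (hη : ‖η‖ ≠ 1) {Φ : R → S}
    (hinj : Function.Injective Φ) (h0 : Φ 0 = 0) {P X Y Z : R} (hP : IsSelfAdjoint P)
    (hΦ : ∀ X, Φ (X * P + η • (P * star X)) = Φ X * Φ P + η • (Φ P * star (Φ X)))
    (hZ : Φ Z = Φ X + Φ Y) (hY : Y * P = 0) :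
    Z * P = X * P := by
  have h := map_jordan_of_map_eq_add hΦ hZ
  simp only [mul_add_smul_mul_star_of_isSelfAdjoint η _ hP] at h
  simp only [hY, star_zero, smul_zero, add_zero, h0] at h
  exact add_smul_star_injective hη (hinj h)

theorem mul_eq_self_of_corner {R : Type*} [Semigroup R] {P X : R} (hP : IsIdempotentElem P)
    (hX : P * X * P = X) : X * P = X := by
  rw [← hX, mul_assoc, hP.eq]

theorem mul_eq_zero_of_corner {R : Type*} [SemigroupWithZero R] {P Q X : R} (hQP : Q * P = 0)
    (hX : Q * X * Q = X) : X * P = 0 := by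
  rw [← hX, mul_assoc, hQP, mul_zero]

variable {A B : Type*}
  [NormedRing A] [StarRing A] [CStarRing A] [NormedAlgebra ℂ A] [StarModule ℂ A] [CompleteSpace A]
  [NormedRing B] [StarRing B] [CStarRing B] [NormedAlgebra ℂ B] [StarModule ℂ B] [CompleteSpace B]

theorem stmt3_general (η : ℂ) (hη1 : ‖η‖ ≠ 1) (P₁ : A)
    (hP : star P₁ = P₁) (hP2 : P₁ * P₁ = P₁)
    (Φ : A → B) (hbij : Function.Bijective Φ) (h0 : Φ 0 = 0)
    (hΦ : ∀ X : A, ∀ P ∈ ({P₁, 1 - P₁} : Set A),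
      Φ (X * P + η • (P * star X)) = Φ X * Φ P + η • (Φ P * star (Φ X)))
    (A₁₁ D₂₂ : A) (hA : P₁ * A₁₁ * P₁ = A₁₁) (hD : (1 - P₁) * D₂₂ * (1 - P₁) = D₂₂) :
    Φ (A₁₁ + D₂₂) = Φ A₁₁ + Φ D₂₂ := by
  have hP₁ : IsIdempotentElem P₁ := hP2
  have hP₂ : IsSelfAdjoint (1 - P₁) := (IsSelfAdjoint.one A).sub hP
  obtain ⟨S, hS⟩ := hbij.2 (Φ A₁₁ + Φ D₂₂)
  have hSP₁ : S * P₁ = A₁₁ := by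
    rw [mul_eq_of_map_eq_add hη1 hbij.1 h0 hP (fun X => hΦ X P₁ (by simp)) hS
      (mul_eq_zero_of_corner hP₁.one_sub_mul_self hD), mul_eq_self_of_corner hP₁ hA]
  have hSP₂ : S * (1 - P₁) = D₂₂ := by
    rw [add_comm] at hS
    rw [mul_eq_of_map_eq_add hη1 hbij.1 h0 hP₂ (fun X => hΦ X (1 - P₁) (by simp)) hS
      (mul_eq_zero_of_corner hP₁.mul_one_sub_self hA), mul_eq_self_of_corner hP₁.one_sub hD]
  rw [← hS, ← hSP₁, ← hSP₂, ← mul_add, add_sub_cancel, mul_one]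

theorem stmt3 (η : ℂ) (hη : η ≠ 0) (hη1 : ‖η‖ ≠ 1) (P₁ : A)
    (hP : star P₁ = P₁) (hP2 : P₁ * P₁ = P₁) (hP0 : P₁ ≠ 0) (hP1 : P₁ ≠ 1)
    (Φ : A → B) (hbij : Function.Bijective Φ) (h0 : Φ 0 = 0)
    (hΦ : ∀ X : A, ∀ P ∈ ({P₁, 1 - P₁} : Set A),
      Φ (X * P + η • (P * star X)) = Φ X * Φ P + η • (Φ P * star (Φ X)))
    (A₁₁ D₂₂ : A) (hA : P₁ * A₁₁ * P₁ = A₁₁) (hD : (1 - P₁) * D₂₂ * (1 - P₁) = D₂₂) :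
    Φ (A₁₁ + D₂₂) = Φ A₁₁ + Φ D₂₂ :=
  stmt3_general η hη1 P₁ hP hP2 Φ hbij h0 hΦ A₁₁ D₂₂ hA hD
end

section
/- Let A and B be unital C*-algebras, P₁ a nontrivial projection in A, P₂ = 1 - P₁, η a nonzero complex number with |η| ≠ 1, and Φ : A → B a bijective map with Φ(0) = 0 preserving the Jordan η*-product for P ∈ {P₁, P₂}. Then for every B₁₂ ∈ P₁AP₂ and C₂₁ ∈ P₂AP₁, one has Φ(B₁₂ + C₂₁) = Φ(B₁₂) + Φ(C₂₁). -/
/-! Write `X ⋄ P = X P + η P X*` (`jordanStarProd`) and pick `T` with `Φ T = Φ B₁₂ + Φ C₂₁`.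
Since `B₁₂ ⋄ P₁ = 0` and `C₂₁ ⋄ P₂ = 0`, additivity of `X ↦ X ⋄ P` on the target side and
injectivity of `Φ` give `T ⋄ P₁ = C₂₁ ⋄ P₁` and `T ⋄ P₂ = B₁₂ ⋄ P₂`. Compressing these identities
to the Peirce corners yields `P₂ T P₁ = C₂₁`, `P₁ T P₂ = B₁₂`, and `Y + η Y* = 0` for the diagonal
corners `Y = Pᵢ T Pᵢ`, which forces `Y = 0` because `|η| ≠ 1`. Hence `T = B₁₂ + C₂₁`. -/

variable {A B : Type*}
  [NormedRing A] [StarRing A] [CStarRing A] [NormedAlgebra ℂ A] [StarModule ℂ A] [CompleteSpace A]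
  [NormedRing B] [StarRing B] [CStarRing B] [NormedAlgebra ℂ B] [StarModule ℂ B] [CompleteSpace B]

open Function

theorem eq_zero_of_add_smul_star_eq_zero {R : Type*} [Ring R] [StarRing R] [Module ℂ R]
    [StarModule ℂ R] {η : ℂ} (hη : ‖η‖ ≠ 1) {x : R} (hx : x + η • star x = 0) : x = 0 := by
  have hstar : star x = -(starRingEnd ℂ η • x) :=
    eq_neg_of_add_eq_zero_left (by simpa [star_smul] using congrArg star hx)
  have hscalar : (1 - η * starRingEnd ℂ η) • x = 0 := by
    rwa [sub_smul, one_smul, mul_smul, sub_eq_add_neg, ← smul_neg, ← hstar]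
  have hne : 1 - η * starRingEnd ℂ η ≠ 0 := by
    rw [Complex.mul_conj, Complex.normSq_eq_norm_sq, sub_ne_zero]
    exact_mod_cast Ne.symm ((pow_eq_one_iff_of_nonneg (norm_nonneg η) two_ne_zero).not.mpr hη)
  exact (smul_eq_zero.mp hscalar).resolve_left hne

def jordanStarProd {R : Type*} [Ring R] [StarRing R] [Module ℂ R] (η : ℂ) (x p : R) : R :=
  x * p + η • (p * star x)

section

variable {R S : Type*} (η : ℂ)

theorem jordanStarProd_add_left [Ring R] [StarRing R] [Module ℂ R] (x y p : R) :
    jordanStarProd η (x + y) p = jordanStarProd η x p + jordanStarProd η y p := by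
  simp only [jordanStarProd, add_mul, star_add, mul_add, smul_add]
  abel

theorem jordanStarProd_of_isSelfAdjoint [Ring R] [StarRing R] [Module ℂ R] {p : R}
    (hp : IsSelfAdjoint p) (x : R) : jordanStarProd η x p = x * p + η • star (x * p) := by
  rw [jordanStarProd, star_mul, hp.star_eq]

theorem jordanStarProd_eq_zero_of_mul_eq_zero [Ring R] [StarRing R] [Module ℂ R] {x p : R}
    (hp : IsSelfAdjoint p) (hx : x * p = 0) : jordanStarProd η x p = 0 := by
  rw [jordanStarProd_of_isSelfAdjoint η hp, hx, star_zero, smul_zero, add_zero]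

theorem mul_jordanStarProd_mul_self [Ring R] [StarRing R] [Algebra ℂ R] {p : R}
    (hp : IsStarProjection p) (x : R) :
    p * jordanStarProd η x p * p = p * x * p + η • star (p * x * p) := by
  have hpp : p * p = p := hp.isIdempotentElem.eq
  rw [jordanStarProd_of_isSelfAdjoint η hp.isSelfAdjoint, mul_add, add_mul, mul_smul_comm,
    smul_mul_assoc]
  simp only [star_mul, hp.isSelfAdjoint.star_eq, mul_assoc, hpp]
  rw [← mul_assoc p p, hpp]

theorem one_sub_mul_jordanStarProd_mul [Ring R] [StarRing R] [Algebra ℂ R] {p : R}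
    (hp : IsIdempotentElem p) (x : R) :
    (1 - p) * jordanStarProd η x p * p = (1 - p) * x * p := by
  rw [jordanStarProd, mul_add, add_mul, mul_smul_comm, smul_mul_assoc, ← mul_assoc (1 - p) p,
    hp.one_sub_mul_self, zero_mul, zero_mul, smul_zero, add_zero]
  simp only [mul_assoc, hp.eq]

theorem mul_eq_of_jordanStarProd_eq [Ring R] [StarRing R] [Algebra ℂ R] [StarModule ℂ R]
    (hη : ‖η‖ ≠ 1) {p t x : R} (hp : IsStarProjection p) (hx : (1 - p) * x * p = x)
    (h : jordanStarProd η t p = jordanStarProd η x p) : t * p = x := by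
  have hpx : p * x * p = 0 := by
    rw [← hx]
    simp only [← mul_assoc, hp.mul_one_sub_self, zero_mul]
  have hdiag : p * t * p = 0 := by
    refine eq_zero_of_add_smul_star_eq_zero hη ?_
    rw [← mul_jordanStarProd_mul_self η hp, h, mul_jordanStarProd_mul_self η hp, hpx,
      star_zero, smul_zero, add_zero]
  have hoff : (1 - p) * t * p = x := by
    rw [← one_sub_mul_jordanStarProd_mul η hp.isIdempotentElem, h,
      one_sub_mul_jordanStarProd_mul η hp.isIdempotentElem, hx]
  calc t * p = p * t * p + (1 - p) * t * p := by noncomm_ring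
    _ = x := by rw [hdiag, hoff, zero_add]

theorem jordanStarProd_eq_of_map_eq_add [Ring R] [StarRing R] [Module ℂ R]
    [Ring S] [StarRing S] [Module ℂ S] {Φ : R → S} (hinj : Injective Φ) (h0 : Φ 0 = 0) {p : R}
    (hΦ : ∀ X, Φ (jordanStarProd η X p) = jordanStarProd η (Φ X) (Φ p)) {t x y : R}
    (ht : Φ t = Φ x + Φ y) (hx : jordanStarProd η x p = 0) :
    jordanStarProd η t p = jordanStarProd η y p :=
  hinj <| by rw [hΦ, ht, jordanStarProd_add_left, ← hΦ, ← hΦ, hx, h0, zero_add]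

end

theorem stmt4_general (η : ℂ) (hη1 : ‖η‖ ≠ 1) (P₁ : A)
    (hP : star P₁ = P₁) (hP2 : P₁ * P₁ = P₁)
    (Φ : A → B) (hbij : Function.Bijective Φ) (h0 : Φ 0 = 0)
    (hΦ : ∀ X : A, ∀ P ∈ ({P₁, 1 - P₁} : Set A),
      Φ (X * P + η • (P * star X)) = Φ X * Φ P + η • (Φ P * star (Φ X)))
    (B₁₂ C₂₁ : A) (hB : P₁ * B₁₂ * (1 - P₁) = B₁₂) (hC : (1 - P₁) * C₂₁ * P₁ = C₂₁) :
    Φ (B₁₂ + C₂₁) = Φ B₁₂ + Φ C₂₁ := by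
  have hp : IsStarProjection P₁ := ⟨hP2, hP⟩
  obtain ⟨T, hT⟩ := hbij.2 (Φ B₁₂ + Φ C₂₁)
  have hTP : T * P₁ = C₂₁ := by
    refine mul_eq_of_jordanStarProd_eq η hη1 hp hC ?_
    refine jordanStarProd_eq_of_map_eq_add η hbij.1 h0 (fun X ↦ hΦ X P₁ (by simp)) hT ?_
    refine jordanStarProd_eq_zero_of_mul_eq_zero η hp.isSelfAdjoint ?_
    rw [← hB, mul_assoc, hp.one_sub_mul_self, mul_zero]
  have hTQ : T * (1 - P₁) = B₁₂ := by
    refine mul_eq_of_jordanStarProd_eq η hη1 hp.one_sub (by rwa [sub_sub_cancel]) ?_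
    refine jordanStarProd_eq_of_map_eq_add η hbij.1 h0 (fun X ↦ hΦ X (1 - P₁) (by simp))
      (hT.trans (add_comm _ _)) ?_
    refine jordanStarProd_eq_zero_of_mul_eq_zero η hp.one_sub.isSelfAdjoint ?_
    rw [← hC, mul_assoc, hp.mul_one_sub_self, mul_zero]
  calc Φ (B₁₂ + C₂₁) = Φ (T * (1 - P₁) + T * P₁) := by rw [hTP, hTQ]
    _ = Φ B₁₂ + Φ C₂₁ := by rw [← mul_add, sub_add_cancel, mul_one, hT]

theorem stmt4 (η : ℂ) (hη : η ≠ 0) (hη1 : ‖η‖ ≠ 1) (P₁ : A)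
    (hP : star P₁ = P₁) (hP2 : P₁ * P₁ = P₁) (hP0 : P₁ ≠ 0) (hP1 : P₁ ≠ 1)
    (Φ : A → B) (hbij : Function.Bijective Φ) (h0 : Φ 0 = 0)
    (hΦ : ∀ X : A, ∀ P ∈ ({P₁, 1 - P₁} : Set A),
      Φ (X * P + η • (P * star X)) = Φ X * Φ P + η • (Φ P * star (Φ X)))
    (B₁₂ C₂₁ : A) (hB : P₁ * B₁₂ * (1 - P₁) = B₁₂) (hC : (1 - P₁) * C₂₁ * P₁ = C₂₁) :
    Φ (B₁₂ + C₂₁) = Φ B₁₂ + Φ C₂₁ :=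
  stmt4_general η hη1 P₁ hP hP2 Φ hbij h0 hΦ B₁₂ C₂₁ hB hC
end

section
/- Let A and B be unital C*-algebras, P₁ a nontrivial projection in A, P₂ = 1 - P₁, η a nonzero complex number with |η| ≠ 1, and Φ : A → B a bijective unital map (Φ(1) = 1) with Φ(0) = 0 preserving the Jordan η*-product for P ∈ {P₁, P₂}. Then Φ(P₁) and Φ(P₂) are self-adjoint idempotents (projections) in B. -/
/-!
Testing the product against `X = 1` gives `Φ((1 + η) P) = (1 + η) Φ P`. Comparing this with the
product `P •_η 1` shows `η Φ(P)* = η Φ P`, and comparing it with `P •_η P` shows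
`(1 + η) Φ(P)² = (1 + η) Φ P`; since `η ≠ 0` and `|η| ≠ 1` forces `1 + η ≠ 0`, `Φ P` is a
projection. The same argument applies to `1 - P₁`.
-/

section JordanStarProduct

variable {R S : Type*} [Ring R] [StarRing R] [Module ℂ R] [Ring S] [StarRing S] [Module ℂ S]

/-- `Φ (X •_η P) = Φ X •_η Φ P`, where `X •_η P = X * P + η • (P * star X)`. -/
def PreservesJordanStarProdAt (η : ℂ) (Φ : R → S) (X P : R) : Prop :=
  Φ (X * P + η • (P * star X)) = Φ X * Φ P + η • (Φ P * star (Φ X))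

lemma one_add_ne_zero_of_norm_ne_one {𝕜 : Type*} [SeminormedRing 𝕜] [NormOneClass 𝕜] {η : 𝕜}
    (hη : ‖η‖ ≠ 1) : 1 + η ≠ 0 := by
  intro h
  rw [eq_neg_of_add_eq_zero_right h, norm_neg, norm_one] at hη
  exact hη rfl

theorem isStarProjection_map_of_preservesJordanStarProdAt {η : ℂ} (hη : η ≠ 0) (hη' : 1 + η ≠ 0)
    {Φ : R → S} (hΦ1 : Φ 1 = 1) {P : R} (hP : IsStarProjection P)
    (h1P : PreservesJordanStarProdAt η Φ 1 P) (hPP : PreservesJordanStarProdAt η Φ P P)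
    (hP1 : PreservesJordanStarProdAt η Φ P 1) : IsStarProjection (Φ P) := by
  unfold PreservesJordanStarProdAt at h1P hPP hP1
  have hP' : star P = P := hP.isSelfAdjoint.star_eq
  simp only [one_mul, mul_one, star_one, hΦ1, hP'] at h1P hP1 hPP
  rw [hP.isIdempotentElem.eq] at hPP
  have hstar : star (Φ P) = Φ P :=
    smul_right_injective S hη (add_left_cancel (hP1.symm.trans h1P))
  rw [hstar] at hPP
  have hidem : (1 + η) • (Φ P * Φ P) = (1 + η) • Φ P := by
    simp only [add_smul, one_smul]
    rw [← hPP, h1P]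
  exact ⟨smul_right_injective S hη' hidem, hstar⟩

end JordanStarProduct

variable {A B : Type*}
  [NormedRing A] [StarRing A] [CStarRing A] [NormedAlgebra ℂ A] [StarModule ℂ A] [CompleteSpace A]
  [NormedRing B] [StarRing B] [CStarRing B] [NormedAlgebra ℂ B] [StarModule ℂ B] [CompleteSpace B]

theorem stmt11_general (η : ℂ) (hη : η ≠ 0) (hη1 : ‖η‖ ≠ 1) (P₁ : A)
    (hP : star P₁ = P₁) (hP2 : P₁ * P₁ = P₁)
    (Φ : A → B)
    (hΦ : ∀ X : A, ∀ P ∈ ({P₁, 1 - P₁} : Set A),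
      Φ (X * P + η • (P * star X)) = Φ X * Φ P + η • (Φ P * star (Φ X)))
    (hunital : Φ 1 = 1)
    (hΦ1 : ∀ X : A, Φ (X * 1 + η • (1 * star X)) = Φ X * Φ 1 + η • (Φ 1 * star (Φ X))) :
    (star (Φ P₁) = Φ P₁ ∧ Φ P₁ * Φ P₁ = Φ P₁) ∧
      (star (Φ (1 - P₁)) = Φ (1 - P₁) ∧ Φ (1 - P₁) * Φ (1 - P₁) = Φ (1 - P₁)) := by
  have hproj : ∀ P ∈ ({P₁, 1 - P₁} : Set A), IsStarProjection P → IsStarProjection (Φ P) :=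
    fun P hmem hP ↦ isStarProjection_map_of_preservesJordanStarProdAt hη
      (one_add_ne_zero_of_norm_ne_one hη1) hunital hP (hΦ 1 P hmem) (hΦ P P hmem) (hΦ1 P)
  have hP₁ : IsStarProjection P₁ := (isStarProjection_iff' ..).mpr ⟨hP2, hP⟩
  obtain ⟨hidem₁, hsa₁⟩ := hproj P₁ (by simp) hP₁
  obtain ⟨hidem₂, hsa₂⟩ := hproj (1 - P₁) (by simp) hP₁.one_sub
  exact ⟨⟨hsa₁.star_eq, hidem₁.eq⟩, hsa₂.star_eq, hidem₂.eq⟩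

theorem stmt11 (η : ℂ) (hη : η ≠ 0) (hη1 : ‖η‖ ≠ 1) (P₁ : A)
    (hP : star P₁ = P₁) (hP2 : P₁ * P₁ = P₁) (hP0 : P₁ ≠ 0) (hP1 : P₁ ≠ 1)
    (Φ : A → B) (hbij : Function.Bijective Φ) (h0 : Φ 0 = 0)
    (hΦ : ∀ X : A, ∀ P ∈ ({P₁, 1 - P₁} : Set A),
      Φ (X * P + η • (P * star X)) = Φ X * Φ P + η • (Φ P * star (Φ X)))
    (hunital : Φ 1 = 1)
    (hΦ1 : ∀ X : A, Φ (X * 1 + η • (1 * star X)) = Φ X * Φ 1 + η • (Φ 1 * star (Φ X))) :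
    (star (Φ P₁) = Φ P₁ ∧ Φ P₁ * Φ P₁ = Φ P₁) ∧
      (star (Φ (1 - P₁)) = Φ (1 - P₁) ∧ Φ (1 - P₁) * Φ (1 - P₁) = Φ (1 - P₁)) :=
  stmt11_general η hη hη1 P₁ hP hP2 Φ hΦ hunital hΦ1
end
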